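/- For every integer n ≥ 0, the number of 2-distant noncrossing matchings of [2n] equals the number of little Schröder paths of length 2n. -/

import Mathlib

/-- A step of a Schröder path: upstep, downstep, or a *double* horizontal step. -/
inductive SchStep : Type
  | up : SchStep
  | down : SchStep
  | horiz : SchStep
deriving DecidableEq

/-- The number of unit steps a step occupies: `horiz` is a double horizontal step. -/
def SchStep.len : SchStep → ℕ
  | .up => 1
  | .down => 1
  | .horiz => 2

/-- The change in height produced by a step. -/
def SchStep.rise : SchStep → ℤ
  | .up => 1
  | .down => -1
  | .horiz => 0

/-- The length of a path (a double horizontal step counts 2). -/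
def pathLen (p : List SchStep) : ℕ := (p.map SchStep.len).sum

/-- The final height of a path started at height 0. -/
def pathHeight (p : List SchStep) : ℤ := (p.map SchStep.rise).sum

/-- A big Schröder path: ends at height 0 and never goes below the x-axis. -/
def IsBigSchroeder (p : List SchStep) : Prop :=
  pathHeight p = 0 ∧ ∀ q : List SchStep, q <+: p → 0 ≤ pathHeight q

/-- A little Schröder path: a big Schröder path with no double horizontal step at
height 0. -/
def IsLittleSchroeder (p : List SchStep) : Prop :=
  IsBigSchroeder p ∧ ∀ q r : List SchStep, p = q ++ SchStep.horiz :: r → pathHeight q ≠ 0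

/-- A matching of `[2n]`: a set of edges `(i, j)` with `i < j`, all vertices lying in
`{1, …, 2n}`, such that every vertex of `{1, …, 2n}` belongs to exactly one edge. -/
def IsMatching (n : ℕ) (M : Finset (ℕ × ℕ)) : Prop :=
  (∀ e ∈ M, e.1 < e.2 ∧ 1 ≤ e.1 ∧ e.2 ≤ 2 * n) ∧
  (∀ v : ℕ, 1 ≤ v → v ≤ 2 * n → ∃! e, e ∈ M ∧ (v = e.1 ∨ v = e.2))

/-- A 2-distant crossing: edges `(i₁, j₁)` and `(i₂, j₂)` with `i₁ < i₂ < j₁ < j₂`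
and `j₁ - i₂ ≥ 2`. -/
def Has2DistantCrossing (M : Finset (ℕ × ℕ)) : Prop :=
  ∃ e ∈ M, ∃ f ∈ M, e.1 < f.1 ∧ f.1 < e.2 ∧ e.2 < f.2 ∧ f.1 + 2 ≤ e.2

/-!
Read a path from left to right, its unit steps sitting at the vertices `1, 2, …`, with a stack of
open vertices: an upstep opens its vertex, a downstep matches its vertex with the top of the
stack, and a double horizontal step on `i, i + 1` matches `i + 1` with the top of the stack and
then opens `i`. The stack size is the height of the path, so the reading succeeds exactly on
little Schröder paths, and the only crossings it creates, `(a, i + 1)` against `(i, j)`, are not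
2-distant.

Conversely a 2-distant noncrossing matching is read back vertex by vertex: a closing vertex is a
downstep, an opening vertex `i` is the first half of a double horizontal step when `i + 1` closes
an edge starting before `i`, and an upstep otherwise. The absence of 2-distant crossings is what
makes every closing vertex find its partner on top of the stack.
-/

lemma mem_iff_of_cons_mem_iff {α : Type*} {x : α} {l₁ l₂ : List α} (h₁ : x ∉ l₁)
    (h₂ : x ∉ l₂) (h : ∀ e, e ∈ x :: l₁ ↔ e ∈ x :: l₂) (e : α) : e ∈ l₁ ↔ e ∈ l₂ := by
  grind

lemma List.Pairwise.exists_eq_cons_of_forall_le {st : List ℕ} (h : st.Pairwise (· > ·))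
    {x : ℕ} (hx : x ∈ st) (hmax : ∀ b ∈ st, b ≤ x) : ∃ t, st = x :: t := by
  cases st with
  | nil => simp at hx
  | cons y t =>
    obtain rfl : y = x := by
      rcases List.mem_cons.mp hx with rfl | hx
      · rfl
      · exact absurd (hmax y List.mem_cons_self) (by grind [List.pairwise_cons])
    exact ⟨t, rfl⟩

section Paths

variable {k : ℤ} {s : SchStep} {p : List SchStep}

lemma pathLen_cons : pathLen (s :: p) = s.len + pathLen p := by
  simp [pathLen]

lemma pathHeight_cons : pathHeight (s :: p) = s.rise + pathHeight p := by
  simp [pathHeight]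

lemma pathLen_eq_zero_iff : pathLen p = 0 ↔ p = [] := by
  cases p with
  | nil => simp [pathLen]
  | cons s p => cases s <;> simp [pathLen_cons, SchStep.len]

def IsLittleSchroederFrom (k : ℤ) (p : List SchStep) : Prop :=
  (k + pathHeight p = 0 ∧ ∀ q, q <+: p → 0 ≤ k + pathHeight q) ∧
    ∀ q r, p = q ++ .horiz :: r → k + pathHeight q ≠ 0

lemma isLittleSchroederFrom_zero_iff : IsLittleSchroederFrom 0 p ↔ IsLittleSchroeder p := by
  simp [IsLittleSchroederFrom, IsLittleSchroeder, IsBigSchroeder]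

lemma IsLittleSchroederFrom.nonneg (h : IsLittleSchroederFrom k p) : 0 ≤ k := by
  simpa [pathHeight] using h.1.2 [] List.nil_prefix

lemma isLittleSchroederFrom_nil : IsLittleSchroederFrom k [] ↔ k = 0 := by
  simp +contextual [IsLittleSchroederFrom, pathHeight]

lemma isLittleSchroederFrom_cons :
    IsLittleSchroederFrom k (s :: p) ↔
      0 ≤ k ∧ (s = .horiz → k ≠ 0) ∧ IsLittleSchroederFrom (k + s.rise) p := by
  simp only [IsLittleSchroederFrom, List.prefix_cons_iff, List.cons_eq_append_iff,
    pathHeight_cons]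
  constructor
  · rintro ⟨⟨hend, hpre⟩, hhor⟩
    refine ⟨by simpa [pathHeight] using hpre [] (.inl rfl), fun hs => ?_,
      ⟨by linarith, fun q hq => ?_⟩, fun q r hqr => ?_⟩
    · simpa [pathHeight] using hhor [] p (.inl ⟨rfl, by rw [hs]⟩)
    · linarith [hpre (s :: q) (.inr ⟨q, rfl, hq⟩), pathHeight_cons (s := s) (p := q)]
    · have := hhor (s :: q) r (.inr ⟨q, rfl, hqr⟩)
      rwa [pathHeight_cons, ← add_assoc] at this
  · rintro ⟨hk, hhk, ⟨hend, hpre⟩, hhor⟩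
    refine ⟨⟨by linarith, ?_⟩, ?_⟩
    · rintro q (rfl | ⟨q, rfl, hq⟩)
      · simpa [pathHeight] using hk
      · rw [pathHeight_cons]
        linarith [hpre q hq]
    · rintro q r (⟨rfl, hs⟩ | ⟨q, rfl, hqr⟩)
      · simp only [List.cons.injEq] at hs
        simpa [pathHeight] using hhk hs.1.symm
      · rw [pathHeight_cons, ← add_assoc]
        exact hhor q r hqr

end Paths

/-- Reads `p` with its first step at vertex `pos`, `st` being the stack of open vertices,
top first. -/
def decode : List SchStep → ℕ → List ℕ → Option (List (ℕ × ℕ))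
  | [], _, [] => some []
  | [], _, _ :: _ => none
  | .up :: p, pos, st => decode p (pos + 1) (pos :: st)
  | .down :: _, _, [] => none
  | .down :: p, pos, a :: st => (decode p (pos + 1) st).map ((a, pos) :: ·)
  | .horiz :: _, _, [] => none
  | .horiz :: p, pos, a :: st => (decode p (pos + 2) (pos :: st)).map ((a, pos + 1) :: ·)

def endpoints (l : List (ℕ × ℕ)) : List ℕ := l.flatMap fun e => [e.1, e.2]

lemma mem_endpoints {v : ℕ} {l : List (ℕ × ℕ)} :
    v ∈ endpoints l ↔ ∃ e ∈ l, v = e.1 ∨ v = e.2 := by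
  simp [endpoints]

lemma eq_of_mem_endpoints {l : List (ℕ × ℕ)} (hl : (endpoints l).Nodup) {e f : ℕ × ℕ}
    (he : e ∈ l) (hf : f ∈ l) {v : ℕ} (hve : v = e.1 ∨ v = e.2)
    (hvf : v = f.1 ∨ v = f.2) : e = f := by
  by_contra hef
  have : Std.Symm (Function.onFun List.Disjoint fun e : ℕ × ℕ => [e.1, e.2]) :=
    ⟨fun _ _ h => h.symm⟩
  exact (List.nodup_flatMap.mp hl).2.forall he hf hef (by simpa using hve) (by simpa using hvf)

section Decode

variable {p q : List SchStep} {pos : ℕ} {st : List ℕ} {l l' : List (ℕ × ℕ)}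
  {e : ℕ × ℕ}

lemma isSome_decode_iff (p : List SchStep) (pos : ℕ) (st : List ℕ) :
    (decode p pos st).isSome ↔ IsLittleSchroederFrom st.length p := by
  induction p generalizing pos st with
  | nil =>
    cases st <;> simp [decode, isLittleSchroederFrom_nil]
    omega
  | cons s p ih =>
    have := @IsLittleSchroederFrom.nonneg
    cases s <;> cases st <;> simp [decode, ih, isLittleSchroederFrom_cons, SchStep.rise] <;> grind

lemma isSome_decode_nil_iff (p : List SchStep) (pos : ℕ) :
    (decode p pos []).isSome ↔ IsLittleSchroeder p := by
  rw [isSome_decode_iff, ← isLittleSchroederFrom_zero_iff, List.length_nil, Nat.cast_zero]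

lemma endpoints_perm_of_decode (h : decode p pos st = some l) :
    (endpoints l).Perm (st ++ List.range' pos (pathLen p)) := by
  induction p generalizing pos st l with
  | nil => cases st <;> simp_all [decode, endpoints, pathLen]
  | cons s p ih =>
    rw [pathLen_cons, add_comm]
    cases s
    case up => simpa [SchStep.len, List.range'_succ] using (ih h).trans List.perm_middle.symm
    all_goals
      rcases st with _ | ⟨a, st⟩
      · simp [decode] at h
      obtain ⟨l, hl, rfl⟩ := Option.map_eq_some_iff.mp h
      simp only [endpoints, List.flatMap_cons] at ih ⊢
    · simpa [SchStep.len, List.range'_succ] using ((ih hl).cons pos).trans List.perm_middle.symm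
    · refine (((ih hl).cons (pos + 1)).trans ?_).cons a
      simpa [SchStep.len, List.range'_succ] using
        (List.Perm.swap pos (pos + 1) _).trans (List.perm_append_comm_assoc [pos, pos + 1] st _)

lemma eq_nil_of_decode_eq_some_nil (h : decode p pos [] = some []) : p = [] := by
  simpa [endpoints, eq_comm, pathLen_eq_zero_iff] using (endpoints_perm_of_decode h).length_eq

lemma fst_mem_or_le_of_mem_decode (h : decode p pos st = some l) (he : e ∈ l) :
    e.1 ∈ st ∨ pos ≤ e.1 := by
  have := (endpoints_perm_of_decode h).subset (mem_endpoints.mpr ⟨e, he, .inl rfl⟩)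
  simp only [List.mem_append, List.mem_range'_1] at this
  exact this.imp_right And.left

lemma le_snd_of_mem_decode (h : decode p pos st = some l) (he : e ∈ l) : pos ≤ e.2 := by
  induction p generalizing pos st l with
  | nil => cases st <;> simp_all [decode]
  | cons s p ih =>
    cases s
    case up => exact (ih h he).trans' (by omega)
    all_goals
      cases st with
      | nil => simp [decode] at h
      | cons a st =>
        obtain ⟨l, hl, rfl⟩ := Option.map_eq_some_iff.mp h
        rcases List.mem_cons.mp he with rfl | he
        · simp
        · exact (ih hl he).trans' (by omega)

lemma fst_lt_snd_of_mem_decode (h : decode p pos st = some l) (hst : ∀ x ∈ st, x < pos)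
    (he : e ∈ l) : e.1 < e.2 := by
  induction p generalizing pos st l with
  | nil => cases st <;> simp_all [decode]
  | cons s p ih =>
    cases s
    case up => exact ih h (fun x hx => by grind) he
    all_goals
      cases st with
      | nil => simp [decode] at h
      | cons a st =>
        obtain ⟨l, hl, rfl⟩ := Option.map_eq_some_iff.mp h
        rcases List.mem_cons.mp he with rfl | he
        · have := hst a List.mem_cons_self
          dsimp only
          omega
        · exact ih hl (fun x hx => by grind) he

lemma head?_eq_of_mem_decode (h : decode p pos st = some l) (he : e ∈ l) (hpos : e.2 = pos) :
    st.head? = some e.1 := by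
  cases p with
  | nil => cases st <;> simp_all [decode]
  | cons s p =>
    cases s
    case up => exact absurd (le_snd_of_mem_decode (p := p) h he) (by omega)
    all_goals
      cases st with
      | nil => simp [decode] at h
      | cons a st =>
        obtain ⟨l, hl, rfl⟩ := Option.map_eq_some_iff.mp h
        rcases List.mem_cons.mp he with rfl | he
        · simp_all
        · exact absurd (le_snd_of_mem_decode hl he) (by omega)

lemma head_eq_of_decode_cons {s : SchStep} (h : decode (s :: p) pos st = some l)
    (hst : ∀ x ∈ st, x < pos) :
    s = if ∃ e ∈ l, e.2 = pos then .down
      else if ∃ e ∈ l, e.2 = pos + 1 ∧ e.1 < pos then .horiz else .up := by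
  cases s
  case up =>
    rw [if_neg, if_neg]
    · rintro ⟨e, he, hpos, hlt⟩
      have := head?_eq_of_mem_decode (p := p) h he hpos
      simp only [List.head?_cons, Option.some.injEq] at this
      omega
    · rintro ⟨e, he, hpos⟩
      have := le_snd_of_mem_decode (p := p) h he
      omega
  all_goals
    rcases st with _ | ⟨a, st⟩
    · simp [decode] at h
    obtain ⟨l, hl, rfl⟩ := Option.map_eq_some_iff.mp h
  · rw [if_pos ⟨_, List.mem_cons_self, rfl⟩]
  · rw [if_neg, if_pos ⟨_, List.mem_cons_self, rfl, hst a List.mem_cons_self⟩]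
    rintro ⟨e, he, hpos⟩
    rcases List.mem_cons.mp he with rfl | he
    · simp at hpos
    · have := le_snd_of_mem_decode hl he
      omega

lemma eq_of_decode_of_mem_iff (hp : decode p pos st = some l) (hq : decode q pos st = some l')
    (hl : ∀ e, e ∈ l ↔ e ∈ l') (hst : ∀ x ∈ st, x < pos) : p = q := by
  induction p generalizing q pos st l l' with
  | nil =>
    cases st <;> simp only [decode, Option.some_inj, reduceCtorEq] at hp
    subst hp
    obtain rfl : l' = [] :=
      List.eq_nil_iff_forall_not_mem.mpr fun e he => by simpa using (hl e).mpr he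
    exact (eq_nil_of_decode_eq_some_nil hq).symm
  | cons s p ih =>
    cases q with
    | nil =>
      cases st <;> simp only [decode, Option.some_inj, reduceCtorEq] at hq
      subst hq
      obtain rfl : l = [] :=
        List.eq_nil_iff_forall_not_mem.mpr fun e he => by simpa using (hl e).mp he
      exact eq_nil_of_decode_eq_some_nil hp
    | cons t q =>
      have hs := head_eq_of_decode_cons hp hst
      simp only [hl] at hs
      obtain rfl := hs.trans (head_eq_of_decode_cons hq hst).symm
      cases s
      case up => rw [ih hp hq hl (fun x hx => by grind)]
      all_goals
        cases st with
        | nil => simp [decode] at hp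
        | cons a st =>
          obtain ⟨l₁, h₁, rfl⟩ := Option.map_eq_some_iff.mp hp
          obtain ⟨l₂, h₂, rfl⟩ := Option.map_eq_some_iff.mp hq
          have hl' := mem_iff_of_cons_mem_iff
            (fun h => absurd (le_snd_of_mem_decode h₁ h) (by simp))
            (fun h => absurd (le_snd_of_mem_decode h₂ h) (by simp)) hl
          rw [ih h₁ h₂ hl' (fun x hx => by grind)]

lemma not_has2DistantCrossing_of_decode (h : decode p pos st = some l)
    (hst : (pos :: st).Pairwise (· > ·)) : ¬ Has2DistantCrossing l.toFinset := by
  induction p generalizing pos st l with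
  | nil => cases st <;> simp_all [decode, Has2DistantCrossing]
  | cons s p ih =>
    cases s
    case up => exact ih h (by grind [List.pairwise_cons])
    all_goals
      cases st with
      | nil => simp [decode] at h
      | cons a st =>
        obtain ⟨l, hl, rfl⟩ := Option.map_eq_some_iff.mp h
        rintro ⟨e, he, f, hf, h₁, h₂, h₃, h₄⟩
        simp only [List.toFinset_cons, Finset.mem_insert, List.mem_toFinset] at he hf
        rcases he with rfl | he <;> rcases hf with rfl | hf
        · omega
        · have := fst_mem_or_le_of_mem_decode hl hf
          grind [List.pairwise_cons]
        · have := le_snd_of_mem_decode hl he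
          grind
        · exact ih hl (by grind [List.pairwise_cons])
            ⟨e, List.mem_toFinset.mpr he, f, List.mem_toFinset.mpr hf, h₁, h₂, h₃, h₄⟩

end Decode

lemma isMatching_of_decode {n : ℕ} {p : List SchStep} {l : List (ℕ × ℕ)}
    (h : decode p 1 [] = some l) (hlen : pathLen p = 2 * n) : IsMatching n l.toFinset := by
  have hperm : (endpoints l).Perm (List.range' 1 (2 * n)) := by
    simpa [hlen] using endpoints_perm_of_decode h
  have hnd : (endpoints l).Nodup := hperm.nodup_iff.mpr List.nodup_range'
  simp only [IsMatching, List.mem_toFinset]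
  refine ⟨fun e he => ⟨fst_lt_snd_of_mem_decode h (by simp) he, ?_, ?_⟩,
    fun v hv1 hv2 => ?_⟩
  · simpa using fst_mem_or_le_of_mem_decode h he
  · have := hperm.subset (mem_endpoints.mpr ⟨e, he, .inr rfl⟩)
    simp only [List.mem_range'_1] at this
    omega
  · obtain ⟨e, he, hv⟩ :=
      mem_endpoints.mp (hperm.symm.subset (List.mem_range'_1.mpr ⟨hv1, by omega⟩))
    exact ⟨e, ⟨he, hv⟩, fun f ⟨hf, hvf⟩ => eq_of_mem_endpoints hnd hf he hvf hv⟩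

section Matching

variable {n : ℕ} {M : Finset (ℕ × ℕ)} {e f : ℕ × ℕ}

lemma IsMatching.eq_of_mem (hM : IsMatching n M) (he : e ∈ M) (hf : f ∈ M) {v : ℕ}
    (hve : v = e.1 ∨ v = e.2) (hvf : v = f.1 ∨ v = f.2) : e = f := by
  have := hM.1 e he
  exact (hM.2 v (by omega) (by omega)).unique ⟨he, hve⟩ ⟨hf, hvf⟩

lemma IsMatching.fst_lt_snd (hM : IsMatching n M) (he : e ∈ M) : e.1 < e.2 := (hM.1 e he).1

lemma IsMatching.eq_of_fst_eq (hM : IsMatching n M) (he : e ∈ M) (hf : f ∈ M)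
    (h : e.1 = f.1) : e = f :=
  hM.eq_of_mem he hf (.inl rfl) (.inl h)

lemma IsMatching.eq_of_snd_eq (hM : IsMatching n M) (he : e ∈ M) (hf : f ∈ M)
    (h : e.2 = f.2) : e = f :=
  hM.eq_of_mem he hf (.inr rfl) (.inr h)

lemma IsMatching.fst_ne_snd (hM : IsMatching n M) (he : e ∈ M) (hf : f ∈ M) : e.1 ≠ f.2 := by
  intro h
  have := hM.fst_lt_snd he
  rw [hM.eq_of_mem he hf (.inl rfl) (.inr h)] at this h
  omega

lemma snd_le_of_not_has2DistantCrossing (hnc : ¬ Has2DistantCrossing M) (he : e ∈ M)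
    (hf : f ∈ M) (h₁ : e.1 < f.1) (h₂ : f.1 + 2 ≤ e.2) : f.2 ≤ e.2 := by
  by_contra h
  exact hnc ⟨e, he, f, hf, h₁, by omega, by omega, h₂⟩

/-- The stack of the reading of `M` just before vertex `pos`. Without 2-distant crossings,
`le_fst` can only fail for `b = pos - 1`: the configuration a double horizontal step consumes. -/
structure IsOpenStack (M : Finset (ℕ × ℕ)) (pos : ℕ) (st : List ℕ) : Prop where
  pairwise : st.Pairwise (· > ·)
  mem_iff : ∀ a, a ∈ st ↔ a < pos ∧ ∃ e ∈ M, e.1 = a ∧ pos ≤ e.2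
  le_fst : ∀ f ∈ M, f.2 = pos → ∀ b ∈ st, b ≤ f.1

variable {pos : ℕ} {st : List ℕ}

lemma IsOpenStack.eq_nil (hM : IsMatching n M) (hst : IsOpenStack M (2 * n + 1) st) :
    st = [] :=
  List.eq_nil_iff_forall_not_mem.mpr fun a ha => by
    obtain ⟨-, g, hg, -, hg2⟩ := (hst.mem_iff a).mp ha
    have := hM.1 g hg
    omega

lemma IsOpenStack.pop (hM : IsMatching n M) (hnc : ¬ Has2DistantCrossing M)
    (hst : IsOpenStack M pos st) (hf : f ∈ M) (hpos : f.2 = pos) :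
    ∃ t, st = f.1 :: t ∧ IsOpenStack M (pos + 1) t := by
  have hlt := hM.fst_lt_snd hf
  obtain ⟨t, rfl⟩ := hst.pairwise.exists_eq_cons_of_forall_le
    ((hst.mem_iff _).mpr ⟨by omega, f, hf, rfl, hpos.ge⟩) (hst.le_fst f hf hpos)
  have htf : ∀ b ∈ t, b < f.1 := (List.pairwise_cons.mp hst.pairwise).1
  refine ⟨t, rfl, (List.pairwise_cons.mp hst.pairwise).2, fun a => ⟨fun ha => ?_, ?_⟩, ?_⟩
  · obtain ⟨hapos, g, hg, rfl, hg2⟩ := (hst.mem_iff a).mp (List.mem_cons_of_mem _ ha)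
    have : g.2 ≠ pos := fun h => by
      have := hM.eq_of_snd_eq hg hf (h.trans hpos.symm)
      grind
    exact ⟨by omega, g, hg, rfl, by omega⟩
  · rintro ⟨hapos, g, hg, rfl, hg2⟩
    have := hM.fst_ne_snd hg hf
    have hmem := (hst.mem_iff g.1).mpr ⟨by omega, g, hg, rfl, by omega⟩
    rcases List.mem_cons.mp hmem with h | h
    · have := hM.eq_of_fst_eq hg hf h
      grind
    · exact h
  · intro f' hf' hpos' b hb
    by_contra hlt'
    obtain ⟨hbpos, g, hg, rfl, hg2⟩ := (hst.mem_iff b).mp (List.mem_cons_of_mem _ hb)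
    have h1 : g ≠ f := fun h => by grind
    have h2 : g ≠ f' := fun h => by grind
    have := snd_le_of_not_has2DistantCrossing hnc hf' hg (by omega) (by omega)
    have h3 : g.2 ≠ pos := fun h => h1 (hM.eq_of_snd_eq hg hf (by omega))
    have h4 : g.2 ≠ pos + 1 := fun h => h2 (hM.eq_of_snd_eq hg hf' (by omega))
    omega

lemma IsOpenStack.push (hM : IsMatching n M) (hst : IsOpenStack M pos st) (he : e ∈ M)
    (hpos : e.1 = pos) (hnext : ∀ f ∈ M, f.2 = pos + 1 → pos ≤ f.1) :
    IsOpenStack M (pos + 1) (pos :: st) := by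
  have hlt := hM.fst_lt_snd he
  refine ⟨List.Pairwise.cons (fun b hb => ((hst.mem_iff b).mp hb).1) hst.pairwise,
    fun a => ⟨fun ha => ?_, ?_⟩, ?_⟩
  · rcases List.mem_cons.mp ha with rfl | ha
    · exact ⟨by omega, e, he, hpos, by omega⟩
    · obtain ⟨hapos, g, hg, rfl, hg2⟩ := (hst.mem_iff a).mp ha
      have := hM.fst_ne_snd he hg
      exact ⟨by omega, g, hg, rfl, by omega⟩
  · rintro ⟨hapos, g, hg, rfl, hg2⟩
    rcases Nat.lt_succ_iff_lt_or_eq.mp hapos with h | h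
    · exact List.mem_cons_of_mem _ ((hst.mem_iff _).mpr ⟨h, g, hg, rfl, by omega⟩)
    · simp [h]
  · intro f hf hpos' b hb
    have := hnext f hf hpos'
    rcases List.mem_cons.mp hb with rfl | hb
    · exact this
    · exact ((hst.mem_iff b).mp hb).1.le.trans this

lemma IsOpenStack.le_fst_of_snd_eq_succ (hM : IsMatching n M) (hnc : ¬ Has2DistantCrossing M)
    (hst : IsOpenStack M pos st) (he : e ∈ M) (hpos : e.1 = pos) (hf : f ∈ M)
    (hfpos : f.2 = pos + 1) : ∀ b ∈ st, b ≤ f.1 := by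
  intro b hb
  by_contra hlt
  obtain ⟨hbpos, g, hg, rfl, hg2⟩ := (hst.mem_iff b).mp hb
  have h1 := hM.fst_ne_snd he hg
  have h2 : g.2 ≠ pos + 1 := fun h => by
    rw [hM.eq_of_snd_eq hg hf (h.trans hfpos.symm)] at hlt
    omega
  have := snd_le_of_not_has2DistantCrossing hnc hf hg (by omega) (by omega)
  omega

lemma IsOpenStack.popPush (hM : IsMatching n M) (hnc : ¬ Has2DistantCrossing M)
    (hst : IsOpenStack M pos st) (he : e ∈ M) (hpos : e.1 = pos) (hf : f ∈ M)
    (hfpos : f.2 = pos + 1) (hflt : f.1 < pos) :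
    ∃ t, st = f.1 :: t ∧ IsOpenStack M (pos + 2) (pos :: t) := by
  obtain ⟨t, rfl⟩ := hst.pairwise.exists_eq_cons_of_forall_le
    ((hst.mem_iff _).mpr ⟨hflt, f, hf, rfl, by omega⟩)
    (hst.le_fst_of_snd_eq_succ hM hnc he hpos hf hfpos)
  have htf : ∀ b ∈ t, b < f.1 := (List.pairwise_cons.mp hst.pairwise).1
  have hsnd : ∀ g ∈ M, g.1 ≠ f.1 → pos ≤ g.2 → pos + 2 ≤ g.2 := fun g hg hgf hg2 => by
    have h1 := hM.fst_ne_snd he hg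
    have h2 : g.2 ≠ pos + 1 := fun h => hgf (by rw [hM.eq_of_snd_eq hg hf (h.trans hfpos.symm)])
    omega
  have he2 := hsnd e he (by omega) (by have := hM.fst_lt_snd he; omega)
  refine ⟨t, rfl, .cons (fun b hb => by grind) (List.pairwise_cons.mp hst.pairwise).2,
    fun a => ⟨fun ha => ?_, ?_⟩, ?_⟩
  · rcases List.mem_cons.mp ha with rfl | ha
    · exact ⟨by omega, e, he, hpos, he2⟩
    · obtain ⟨hapos, g, hg, rfl, hg2⟩ := (hst.mem_iff a).mp (List.mem_cons_of_mem _ ha)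
      exact ⟨by omega, g, hg, rfl, hsnd g hg (htf _ ha).ne hg2⟩
  · rintro ⟨hapos, g, hg, rfl, hg2⟩
    have := hM.fst_ne_snd hg hf
    rcases Nat.lt_or_ge g.1 pos with h | h
    · rcases List.mem_cons.mp ((hst.mem_iff _).mpr ⟨h, g, hg, rfl, by omega⟩) with h' | h'
      · rw [hM.eq_of_fst_eq hg hf h'] at hg2
        omega
      · exact List.mem_cons_of_mem _ h'
    · simp [show g.1 = pos by omega]
  · intro f' hf' hpos' b hb
    by_contra hlt
    rcases List.mem_cons.mp hb with rfl | hb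
    · have := snd_le_of_not_has2DistantCrossing hnc hf' he (by omega) (by omega)
      have : e.2 ≠ b + 2 := fun h => by
        rw [hM.eq_of_snd_eq he hf' (h.trans hpos'.symm)] at hpos
        omega
      omega
    · obtain ⟨hbpos, g, hg, rfl, hg2⟩ := (hst.mem_iff _).mp (List.mem_cons_of_mem _ hb)
      have h1 := hsnd g hg (htf _ hb).ne hg2
      have h2 : g.2 ≠ pos + 2 := fun h => by
        rw [hM.eq_of_snd_eq hg hf' (h.trans hpos'.symm)] at hlt
        omega
      have := snd_le_of_not_has2DistantCrossing hnc hf' hg (by omega) (by grind)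
      omega

lemma exists_decode_of_isOpenStack (hM : IsMatching n M) (hnc : ¬ Has2DistantCrossing M)
    (k : ℕ) (hk : pos + k = 2 * n + 1) (hpos : 1 ≤ pos) (hst : IsOpenStack M pos st) :
    ∃ p l, decode p pos st = some l ∧ pathLen p = k ∧
      ∀ e, e ∈ l ↔ e ∈ M ∧ pos ≤ e.2 := by
  induction k using Nat.strong_induction_on generalizing pos st with
  | _ k ih =>
  rcases Nat.eq_zero_or_pos k with rfl | hk0
  · subst hk
    obtain rfl := hst.eq_nil hM
    exact ⟨[], [], rfl, rfl, fun e => by simpa using fun he => by have := hM.1 e he; omega⟩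
  obtain ⟨e, ⟨he, hve⟩, -⟩ := hM.2 pos hpos (by omega)
  have hlt := hM.fst_lt_snd he
  rcases hve with hopen | hclose
  · have hsnd : ∀ g ∈ M, g.2 ≠ pos := fun g hg => hopen ▸ (hM.fst_ne_snd he hg).symm
    by_cases hjump : ∃ f ∈ M, f.2 = pos + 1 ∧ f.1 < pos
    · obtain ⟨f, hf, hf2, hf1⟩ := hjump
      obtain ⟨t, rfl, ht⟩ := hst.popPush hM hnc he hopen.symm hf hf2 hf1
      have := hM.1 f hf
      obtain ⟨p, l, hp, hlen, hl⟩ := ih (k - 2) (by omega) (by omega) (by omega) ht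
      refine ⟨.horiz :: p, f :: l, by simp [decode, hp, ← hf2], ?_, fun g => ?_⟩
      · simp only [pathLen_cons, SchStep.len]
        omega
      · have := hsnd g
        have := fun h => hM.eq_of_snd_eq (e := g) h hf
        grind
    · push Not at hjump
      obtain ⟨p, l, hp, hlen, hl⟩ :=
        ih (k - 1) (by omega) (by omega) (by omega) (hst.push hM he hopen.symm hjump)
      refine ⟨.up :: p, l, hp, ?_, fun g => ?_⟩
      · simp only [pathLen_cons, SchStep.len]
        omega
      · have := hsnd g
        grind
  · subst hclose
    obtain ⟨t, rfl, ht⟩ := hst.pop hM hnc he rfl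
    obtain ⟨p, l, hp, hlen, hl⟩ := ih (k - 1) (by omega) (by omega) (by omega) ht
    refine ⟨.down :: p, e :: l, by simp [decode, hp], ?_, fun g => ?_⟩
    · simp only [pathLen_cons, SchStep.len]
      omega
    · have := fun h => hM.eq_of_snd_eq (e := g) h he
      grind

end Matching

lemma exists_decode_eq_of_isMatching {n : ℕ} {M : Finset (ℕ × ℕ)} (hM : IsMatching n M)
    (hnc : ¬ Has2DistantCrossing M) :
    ∃ p l, decode p 1 [] = some l ∧ pathLen p = 2 * n ∧ l.toFinset = M := by
  have hst : IsOpenStack M 1 [] :=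
    ⟨.nil, fun a => ⟨fun h => absurd h List.not_mem_nil,
      fun ⟨ha, e, he, hea, _⟩ => absurd (hM.1 e he).2.1 (by omega)⟩, by simp⟩
  obtain ⟨p, l, hp, hlen, hl⟩ :=
    exists_decode_of_isOpenStack hM hnc (2 * n) (by omega) le_rfl hst
  refine ⟨p, l, hp, hlen, Finset.ext fun e => ?_⟩
  rw [List.mem_toFinset, hl]
  exact ⟨And.left, fun he => ⟨he, by have := hM.1 e he; omega⟩⟩

/-- The number of 2-distant noncrossing matchings of `[2n]` equals the number of little
Schröder paths of length `2n`. -/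
theorem matchings_eq_little_schroeder (n : ℕ) :
    Nat.card {M : Finset (ℕ × ℕ) // IsMatching n M ∧ ¬ Has2DistantCrossing M} =
      Nat.card {p : List SchStep // IsLittleSchroeder p ∧ pathLen p = 2 * n} := by
  have hdecode (p : {p : List SchStep // IsLittleSchroeder p ∧ pathLen p = 2 * n}) :
      decode p.1 1 [] = some ((decode p.1 1 []).get _) :=
    Option.eq_some_of_isSome <| (isSome_decode_nil_iff p.1 1).mpr p.2.1
  let F (p : {p : List SchStep // IsLittleSchroeder p ∧ pathLen p = 2 * n}) :
      {M : Finset (ℕ × ℕ) // IsMatching n M ∧ ¬ Has2DistantCrossing M} :=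
    ⟨_, isMatching_of_decode (hdecode p) p.2.2,
      not_has2DistantCrossing_of_decode (hdecode p) (by simp)⟩
  refine (Nat.card_eq_of_bijective F ⟨fun p q hpq => Subtype.ext ?_, fun M => ?_⟩).symm
  · refine eq_of_decode_of_mem_iff (hdecode p) (hdecode q) (fun e => ?_) (by simp)
    simpa [F] using Finset.ext_iff.mp (congrArg Subtype.val hpq) e
  · obtain ⟨M, hM, hnc⟩ := M
    obtain ⟨p, l, hp, hlen, rfl⟩ := exists_decode_eq_of_isMatching hM hnc
    have hlittle := (isSome_decode_nil_iff p 1).mp (Option.isSome_iff_exists.mpr ⟨l, hp⟩)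
    exact ⟨⟨p, hlittle, hlen⟩, Subtype.ext (by simp [F, hp])⟩
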